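/- Let n ≥ 4 and suppose that for every ordered pair (i, j) of distinct elements of Fin n we are given a weighted cubic tree M(i,j) whose leaves are labeled bijectively by the set Fin n \ {i, j}; write d^{(ij)}_{kl} for the distance in M(i,j) between the leaves labeled k and l. Assume the compatibility condition: for all pairwise distinct i, j, k, l in Fin n, the value d^{(ij)}_{kl} is invariant under every permutation of the four indices (i, j, k, l), i.e. d^{(ij)}_{kl} = d^{(ji)}_{kl} = d^{(ik)}_{jl} = d^{(il)}_{kj} = d^{(kl)}_{ij} = d^{(jl)}_{ik} = d^{(kj)}_{il}, etc. Then the matrix of trees is symmetric: for every pair of distinct i, j there is a graph isomorphism from M(i,j) to M(j,i) that preserves leaf labels and edge weights. -/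

import Mathlib

/-- A weighted cubic tree: a finite connected acyclic simple graph in which every vertex
has degree 1 or 3, with a strictly positive real weight on each edge. -/
structure WCubicTree where
  V : Type
  [fintypeV : Fintype V]
  [decEqV : DecidableEq V]
  G : SimpleGraph V
  [decAdj : DecidableRel G.Adj]
  connected : G.Connected
  acyclic : G.IsAcyclic
  cubic : ∀ v : V, G.degree v = 1 ∨ G.degree v = 3
  w : Sym2 V → ℝ
  w_pos : ∀ e ∈ G.edgeSet, 0 < w e

attribute [instance] WCubicTree.fintypeV WCubicTree.decEqV WCubicTree.decAdj

/-- A leaf is a vertex of degree 1. -/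
def WCubicTree.IsLeaf (T : WCubicTree) (v : T.V) : Prop := T.G.degree v = 1

/-- Some walk between two vertices, which exists by connectedness. -/
noncomputable def WCubicTree.walk (T : WCubicTree) (u v : T.V) : T.G.Walk u v :=
  Classical.choice (T.connected.preconnected u v)

/-- The distance between two vertices: the sum of the weights of the edges of the
(unique, by acyclicity) path joining them. -/
noncomputable def WCubicTree.dist (T : WCubicTree) (u v : T.V) : ℝ :=
  (((T.walk u v).toPath : T.G.Path u v).val.edges.map T.w).sum


/-!
A weighted tree without vertices of degree two is determined by the distances between its
leaves. Every vertex `v` is a median of three leaves `a, b, c`, so `v` sits on the geodesic from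
`a` to `b` at distance `(d(a,b) + d(a,c) - d(b,c))/2` from `a`, and the distance from `v` to any
other leaf is then an explicit function of leaf distances. Hence each vertex of one tree has a
counterpart in the other with the same distances to all leaves. The distance between two vertices
is the largest difference of their distances to a leaf, so these counterparts form an isometry;
an isometry preserves adjacency (no vertex lies strictly between adjacent ones) and edge weights
(the distance between adjacent vertices). Compatibility under the transposition of `i` and `j`
says that `M i j` and `M j i` have the same leaf distances.
-/

namespace SimpleGraph.Walk

variable {V : Type*} {G : SimpleGraph V}

lemma IsPath.append {u v w : V} {p : G.Walk u v} {q : G.Walk v w} (hp : p.IsPath) (hq : q.IsPath)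
    (hpq : ∀ z ∈ p.support, z ∈ q.support → z = v) : (p.append q).IsPath := by
  rw [isPath_def, support_append]
  have hq' := hq.support_nodup
  rw [← cons_tail_support, List.nodup_cons] at hq'
  refine hp.support_nodup.append hq'.2 fun z hzp hzq => ?_
  obtain rfl := hpq z hzp (List.mem_of_mem_tail hzq)
  exact hq'.1 hzq

lemma exists_append_eq_of_end_mem {x y : V} (s : Set V) (q : G.Walk x y) (hy : y ∈ s) :
    ∃ (m : V) (q₁ : G.Walk x m) (q₂ : G.Walk m y),
      m ∈ s ∧ q = q₁.append q₂ ∧ ∀ z ∈ q₁.support, z ∈ s → z = m := by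
  induction q with
  | nil => exact ⟨_, nil, nil, hy, rfl, by simp⟩
  | @cons a b c hab q ih =>
    by_cases ha : a ∈ s
    · exact ⟨a, nil, cons hab q, ha, rfl, by simp⟩
    obtain ⟨m, q₁, q₂, hm, rfl, hq₁⟩ := ih hy
    refine ⟨m, cons hab q₁, q₂, hm, rfl, fun z hz hzs => ?_⟩
    rcases List.mem_cons.mp (support_cons hab q₁ ▸ hz) with rfl | hz
    · exact absurd hzs ha
    · exact hq₁ z hz hzs

end SimpleGraph.Walk

namespace WCubicTree

open SimpleGraph Walk

variable (T : WCubicTree)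

noncomputable def geodesic (u v : T.V) : T.G.Walk u v := ((T.walk u v).toPath : T.G.Path u v).1

lemma isPath_geodesic (u v : T.V) : (T.geodesic u v).IsPath :=
  ((T.walk u v).toPath : T.G.Path u v).2

variable {T}

lemma geodesic_eq {u v : T.V} {p : T.G.Walk u v} (hp : p.IsPath) : T.geodesic u v = p :=
  congrArg Subtype.val ((T.acyclic.subsingleton_path u v).elim (T.walk u v).toPath ⟨p, hp⟩)

lemma geodesic_of_adj {u v : T.V} (h : T.G.Adj u v) : T.geodesic u v = cons h nil :=
  geodesic_eq (Path.singleton h).2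

lemma dist_eq_of_isPath {u v : T.V} {p : T.G.Walk u v} (hp : p.IsPath) :
    T.dist u v = (p.edges.map T.w).sum := by
  rw [← geodesic_eq hp]
  rfl

lemma w_pos_of_mem_edges {u v : T.V} (p : T.G.Walk u v) {e : Sym2 T.V} (he : e ∈ p.edges) :
    0 < T.w e :=
  T.w_pos e (p.edges_subset_edgeSet he)

variable (T)

lemma dist_comm (u v : T.V) : T.dist u v = T.dist v u := by
  rw [dist_eq_of_isPath (T.isPath_geodesic v u).reverse, dist_eq_of_isPath (T.isPath_geodesic v u),
    edges_reverse, List.map_reverse, List.sum_reverse]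

@[simp] lemma dist_self (u : T.V) : T.dist u u = 0 := by
  simp [dist_eq_of_isPath IsPath.nil]

lemma dist_nonneg (u v : T.V) : 0 ≤ T.dist u v :=
  List.sum_nonneg <| by simpa using fun e he => (w_pos_of_mem_edges _ he).le

variable {T}

lemma dist_pos {u v : T.V} (h : u ≠ v) : 0 < T.dist u v := by
  have hne : (T.geodesic u v).edges ≠ [] := by
    simpa [← length_edges, length_eq_zero_iff] using mt Walk.Nil.eq h
  rw [dist_eq_of_isPath (T.isPath_geodesic u v)]
  exact List.sum_pos _ (by simpa using fun e he => w_pos_of_mem_edges _ he) (by simpa using hne)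

lemma dist_eq_zero_iff {u v : T.V} : T.dist u v = 0 ↔ u = v :=
  ⟨fun h => by_contra fun huv => (dist_pos huv).ne' h, fun h => h ▸ T.dist_self u⟩

lemma dist_of_adj {u v : T.V} (h : T.G.Adj u v) : T.dist u v = T.w s(u, v) := by
  simp [dist_eq_of_isPath (Path.singleton h).2]

lemma dist_add_dist_of_mem_support {u v z : T.V} {p : T.G.Walk u v} (hp : p.IsPath)
    (hz : z ∈ p.support) : T.dist u z + T.dist z v = T.dist u v := by
  rw [dist_eq_of_isPath hp, ← take_spec p hz, edges_append, dist_eq_of_isPath (hp.takeUntil hz),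
    dist_eq_of_isPath (hp.dropUntil hz), List.map_append, List.sum_append]

variable (T) in
def IsMedian (a b c m : T.V) : Prop :=
  T.dist a m + T.dist m b = T.dist a b ∧ T.dist a m + T.dist m c = T.dist a c ∧
    T.dist b m + T.dist m c = T.dist b c

/-- The median is where the geodesic from `c` to `a` first meets the geodesic from `a` to `b`. -/
lemma exists_mem_support_isMedian (a b c : T.V) :
    ∃ m ∈ (T.geodesic a b).support, T.IsMedian a b c m := by
  have hab := T.isPath_geodesic a b
  obtain ⟨m, q₁, q₂, hm, hq, hq₁⟩ := exists_append_eq_of_end_mem {z | z ∈ (T.geodesic a b).support}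
    (T.geodesic c a) (T.geodesic a b).start_mem_support
  have hca : T.dist c m + T.dist m a = T.dist c a := by
    refine dist_add_dist_of_mem_support (T.isPath_geodesic c a) ?_
    rw [hq, mem_support_append_iff]
    exact Or.inl q₁.end_mem_support
  have hq₁b : (q₁.append ((T.geodesic a b).dropUntil m hm)).IsPath :=
    (hq ▸ T.isPath_geodesic c a).of_append_left.append (hab.dropUntil hm) fun z hz hz' =>
      hq₁ z hz ((T.geodesic a b).support_dropUntil_subset_support hm hz')
  have hcb : T.dist c m + T.dist m b = T.dist c b :=
    dist_add_dist_of_mem_support hq₁b ((mem_support_append_iff _ _).2 (Or.inl q₁.end_mem_support))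
  refine ⟨m, hm, dist_add_dist_of_mem_support hab hm, ?_, ?_⟩
  · linarith [T.dist_comm c m, T.dist_comm m a, T.dist_comm c a]
  · linarith [T.dist_comm c m, T.dist_comm c b, T.dist_comm m b]

lemma dist_triangle (u x v : T.V) : T.dist u v ≤ T.dist u x + T.dist x v := by
  obtain ⟨m, -, h₁, h₂, h₃⟩ := exists_mem_support_isMedian u v x
  linarith [T.dist_nonneg m x, T.dist_comm x v, T.dist_comm m v]

lemma mem_support_geodesic_iff {u v z : T.V} :
    z ∈ (T.geodesic u v).support ↔ T.dist u z + T.dist z v = T.dist u v := by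
  refine ⟨dist_add_dist_of_mem_support (T.isPath_geodesic u v), fun hz => ?_⟩
  obtain ⟨m, hm, h₁, h₂, h₃⟩ := exists_mem_support_isMedian u v z
  have : T.dist m z = 0 := by linarith [T.dist_nonneg m z, T.dist_comm z v, T.dist_comm m v]
  rwa [dist_eq_zero_iff.mp this] at hm

lemma dist_eq_abs_sub_of_dist_add_dist {a b p q : T.V}
    (hp : T.dist a p + T.dist p b = T.dist a b) (hq : T.dist a q + T.dist q b = T.dist a b) :
    T.dist p q = |T.dist a p - T.dist a q| := by
  have hab := T.isPath_geodesic a b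
  rw [← mem_support_geodesic_iff] at hp hq
  rw [← take_spec _ hp, mem_support_append_iff] at hq
  rcases hq with hq | hq
  · have := dist_add_dist_of_mem_support (hab.takeUntil hp) hq
    rw [abs_of_nonneg (by linarith [T.dist_nonneg q p])]
    linarith [T.dist_comm p q]
  · have := dist_add_dist_of_mem_support (hab.dropUntil hp) hq
    have := dist_add_dist_of_mem_support hab hp
    have := dist_add_dist_of_mem_support hab (take_spec _ hp ▸
      (mem_support_append_iff _ _).2 (Or.inr hq))
    rw [abs_of_nonpos (by linarith [T.dist_nonneg p q])]
    linarith

lemma adj_iff_forall_dist_add_dist {u v : T.V} :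
    T.G.Adj u v ↔ u ≠ v ∧ ∀ z, T.dist u z + T.dist z v = T.dist u v → z = u ∨ z = v := by
  refine ⟨fun h => ⟨h.ne, fun z hz => ?_⟩, fun ⟨huv, h⟩ => ?_⟩
  · rw [← mem_support_geodesic_iff, geodesic_of_adj h] at hz
    simpa using hz
  · have hnil : ¬ (T.geodesic u v).Nil := fun h => huv h.eq
    have hsnd := List.mem_of_mem_tail (snd_mem_tail_support hnil)
    rcases h _ (mem_support_geodesic_iff.mp hsnd) with h | h
    · exact absurd h (adj_snd hnil).ne'
    · exact h ▸ adj_snd hnil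

lemma exists_adj_notMem_support {u a : T.V} {p : T.G.Walk u a} (hp : p.IsPath)
    (ha : ¬ T.IsLeaf a) : ∃ b, T.G.Adj a b ∧ b ∉ p.support := by
  have : 1 < (T.G.neighborFinset a).card := by
    rw [card_neighborFinset_eq_degree, (T.cubic a).resolve_left ha]
    norm_num
  obtain ⟨x, hx, y, hy, hxy⟩ := Finset.one_lt_card.mp this
  rw [mem_neighborFinset] at hx hy
  by_contra! h
  exact hxy ((T.acyclic.eq_penultimate_of_adj_end hp hx (h x hx)).trans
    (T.acyclic.eq_penultimate_of_adj_end hp hy (h y hy)).symm)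

/-- A vertex farthest from `u` among those beyond `v` must be a leaf, since any other vertex has
a neighbour leading away from `u`. -/
lemma exists_isLeaf_dist_add_dist (u v : T.V) :
    ∃ a, T.IsLeaf a ∧ T.dist u v + T.dist v a = T.dist u a := by
  obtain ⟨a, ha, hmax⟩ := Finset.exists_max_image
    (Finset.univ.filter fun a => T.dist u v + T.dist v a = T.dist u a) (T.dist u) ⟨v, by simp⟩
  rw [Finset.mem_filter] at ha
  refine ⟨a, by_contra fun hleaf => ?_, ha.2⟩
  obtain ⟨b, hab, hb⟩ := exists_adj_notMem_support (T.isPath_geodesic u a) hleaf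
  have hp := (T.isPath_geodesic u a).concat hb hab
  have hub : T.dist u b = T.dist u a + T.w s(a, b) := by
    rw [dist_eq_of_isPath hp, dist_eq_of_isPath (T.isPath_geodesic u a), edges_concat]
    simp
  have hv : v ∈ ((T.geodesic u a).concat hab).support :=
    support_subset_support_concat _ hab (mem_support_geodesic_iff.mpr ha.2)
  have := hmax b (Finset.mem_filter.mpr ⟨Finset.mem_univ b,
    dist_add_dist_of_mem_support hp hv⟩)
  linarith [T.w_pos s(a, b) hab]

lemma dist_add_dist_of_snd_ne {v a b : T.V} (h : (T.geodesic v a).snd ≠ (T.geodesic v b).snd) :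
    T.dist a v + T.dist v b = T.dist a b := by
  have ha := T.isPath_geodesic v a
  have hb := T.isPath_geodesic v b
  refine dist_add_dist_of_mem_support (ha.reverse.append hb fun z hza hzb => ?_) (by simp)
  rw [support_reverse, List.mem_reverse] at hza
  by_contra hz
  apply h
  rw [← snd_takeUntil hz _ hza, ← snd_takeUntil hz _ hzb, ← geodesic_eq (ha.takeUntil hza),
    ← geodesic_eq (hb.takeUntil hzb)]

lemma exists_isLeaf_isMedian (v : T.V) :
    ∃ a b c, T.IsLeaf a ∧ T.IsLeaf b ∧ T.IsLeaf c ∧ T.IsMedian a b c v := by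
  rcases T.cubic v with hv | hv
  · exact ⟨v, v, v, hv, hv, hv, by simp [IsMedian]⟩
  have branch : ∀ x, T.G.Adj v x → ∃ a, T.IsLeaf a ∧ (T.geodesic v a).snd = x := by
    intro x hx
    obtain ⟨a, ha, hxa⟩ := exists_isLeaf_dist_add_dist v x
    exact ⟨a, ha, (T.acyclic.eq_snd_of_adj_start (T.isPath_geodesic v a) hx
      (mem_support_geodesic_iff.mpr hxa)).symm⟩
  rw [← card_neighborFinset_eq_degree, Finset.card_eq_three] at hv
  obtain ⟨x, y, z, hxy, hxz, hyz, hN⟩ := hv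
  have hadj : ∀ w ∈ ({x, y, z} : Finset T.V), T.G.Adj v w := fun w hw =>
    (mem_neighborFinset _ _ _).mp (hN ▸ hw)
  obtain ⟨a, ha, rfl⟩ := branch x (hadj x (by simp))
  obtain ⟨b, hb, rfl⟩ := branch y (hadj y (by simp))
  obtain ⟨c, hc, rfl⟩ := branch z (hadj z (by simp))
  exact ⟨a, b, c, ha, hb, hc, dist_add_dist_of_snd_ne hxy, dist_add_dist_of_snd_ne hxz,
    dist_add_dist_of_snd_ne hyz⟩

/-- The first summand is the distance from `z` to the geodesic from `a` to `b`, attained at the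
median of `a`, `b`, `z`; the second is the distance from that median to `m`. -/
lemma dist_eq_of_dist_add_dist {a b m : T.V} (hm : T.dist a m + T.dist m b = T.dist a b)
    (z : T.V) :
    T.dist z m = (T.dist z a + T.dist z b - T.dist a b) / 2 +
      |(T.dist z a + T.dist a b - T.dist z b) / 2 - T.dist a m| := by
  obtain ⟨g, -, hg, hga, hgb⟩ := exists_mem_support_isMedian a b z
  have hmg := dist_eq_abs_sub_of_dist_add_dist hm hg
  have := T.dist_comm a z
  have := T.dist_comm b z
  have := T.dist_comm g z
  have := T.dist_comm g m
  have := T.dist_comm b g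
  have : T.dist z m = T.dist z g + T.dist m g := by
    have := T.dist_triangle z g m
    rcases abs_cases (T.dist a m - T.dist a g) with ⟨h, -⟩ | ⟨h, -⟩ <;> rw [h] at hmg
    · linarith [T.dist_triangle z m b, T.dist_comm m b]
    · linarith [T.dist_triangle z m a, T.dist_comm m a]
  rw [this, hmg, abs_sub_comm]
  congr 2 <;> linarith

section Reconstruction

variable {ι : Type*}

noncomputable def profile (T : WCubicTree) (L : ι → T.V) (v : T.V) : ι → ℝ :=
  fun k => T.dist (L k) v

variable {T₁ T₂ : WCubicTree} {L₁ : ι → T₁.V} {L₂ : ι → T₂.V}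

lemma dist_le_of_profile_eq (hL₁ : ∀ v, T₁.IsLeaf v → ∃ k, L₁ k = v) {u₁ v₁ : T₁.V}
    {u₂ v₂ : T₂.V} (hu : T₁.profile L₁ u₁ = T₂.profile L₂ u₂)
    (hv : T₁.profile L₁ v₁ = T₂.profile L₂ v₂) : T₁.dist u₁ v₁ ≤ T₂.dist u₂ v₂ := by
  obtain ⟨a, ha, hbeyond⟩ := exists_isLeaf_dist_add_dist u₁ v₁
  obtain ⟨k, rfl⟩ := hL₁ a ha
  have hu := congrFun hu k
  have hv := congrFun hv k
  simp only [profile] at hu hv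
  linarith [T₂.dist_triangle (L₂ k) v₂ u₂, T₂.dist_comm v₂ u₂, T₁.dist_comm u₁ (L₁ k),
    T₁.dist_comm v₁ (L₁ k)]

lemma profile_injective {T : WCubicTree} {L : ι → T.V} (hL : ∀ v, T.IsLeaf v → ∃ k, L k = v) :
    Function.Injective (T.profile L) := fun u v h =>
  dist_eq_zero_iff.mp <| le_antisymm
    (by simpa using dist_le_of_profile_eq hL h (rfl : T.profile L v = T.profile L v))
    (T.dist_nonneg u v)

lemma exists_profile_eq (hL₁ : ∀ v, T₁.IsLeaf v → ∃ k, L₁ k = v)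
    (hdist : ∀ k l, T₁.dist (L₁ k) (L₁ l) = T₂.dist (L₂ k) (L₂ l)) (v : T₁.V) :
    ∃ m : T₂.V, T₂.profile L₂ m = T₁.profile L₁ v := by
  obtain ⟨a, b, c, ha, hb, hc, hab, hac, hbc⟩ := exists_isLeaf_isMedian v
  obtain ⟨ka, rfl⟩ := hL₁ a ha
  obtain ⟨kb, rfl⟩ := hL₁ b hb
  obtain ⟨kc, rfl⟩ := hL₁ c hc
  obtain ⟨m, -, hab₂, hac₂, hbc₂⟩ := exists_mem_support_isMedian (L₂ ka) (L₂ kb) (L₂ kc)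
  have hma : T₂.dist (L₂ ka) m = T₁.dist (L₁ ka) v := by
    linarith [hdist ka kb, hdist ka kc, hdist kb kc, T₁.dist_comm v (L₁ kb), T₂.dist_comm m (L₂ kb)]
  refine ⟨m, funext fun k => ?_⟩
  simp only [profile]
  rw [dist_eq_of_dist_add_dist hab₂, dist_eq_of_dist_add_dist hab, hma, hdist k ka, hdist k kb,
    hdist ka kb]

lemma adj_iff_of_dist_eq (e : T₁.V ≃ T₂.V) (he : ∀ u v, T₂.dist (e u) (e v) = T₁.dist u v)
    {u v : T₁.V} : T₂.G.Adj (e u) (e v) ↔ T₁.G.Adj u v := by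
  rw [adj_iff_forall_dist_add_dist, adj_iff_forall_dist_add_dist, ← e.forall_congr_right]
  simp only [he, e.apply_eq_iff_eq, ne_eq]

theorem exists_iso_of_leaf_dist_eq (hL₁ : ∀ v, T₁.IsLeaf v → ∃ k, L₁ k = v)
    (hL₂ : ∀ v, T₂.IsLeaf v → ∃ k, L₂ k = v)
    (hdist : ∀ k l, T₁.dist (L₁ k) (L₁ l) = T₂.dist (L₂ k) (L₂ l)) :
    ∃ φ : T₁.G ≃g T₂.G, (∀ k, φ (L₁ k) = L₂ k) ∧
      ∀ e ∈ T₁.G.edgeSet, T₂.w (Sym2.map φ e) = T₁.w e := by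
  choose φ hφ using exists_profile_eq hL₁ hdist
  choose ψ hψ using exists_profile_eq hL₂ fun k l => (hdist k l).symm
  have hψφ (v : T₁.V) : ψ (φ v) = v := profile_injective hL₁ (by rw [hψ, hφ])
  have hφψ (v : T₂.V) : φ (ψ v) = v := profile_injective hL₂ (by rw [hφ, hψ])
  have hφ_dist (u v : T₁.V) : T₂.dist (φ u) (φ v) = T₁.dist u v :=
    le_antisymm (dist_le_of_profile_eq hL₂ (hφ u) (hφ v))
      (dist_le_of_profile_eq hL₁ (hφ u).symm (hφ v).symm)
  let e : T₁.V ≃ T₂.V := ⟨φ, ψ, hψφ, hφψ⟩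
  refine ⟨⟨e, adj_iff_of_dist_eq e hφ_dist⟩, fun k => profile_injective hL₂ ?_, ?_⟩
  · exact (hφ _).trans (funext fun l => hdist l k)
  · intro s hs
    induction s using Sym2.ind with
    | _ u v =>
      have hs₂ : T₂.G.Adj (φ u) (φ v) := (adj_iff_of_dist_eq e hφ_dist).mpr hs
      change T₂.w s(φ u, φ v) = T₁.w s(u, v)
      rw [← dist_of_adj hs, ← dist_of_adj hs₂, hφ_dist]

end Reconstruction

end WCubicTree

theorem planar_matrix_symmetric_general
    (n : ℕ)
    (M : ∀ i j : Fin n, i ≠ j → WCubicTree)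
    (ℓ : ∀ (i j : Fin n) (h : i ≠ j), Fin n → (M i j h).V)
    (hsurj : ∀ (i j : Fin n) (h : i ≠ j) (v : (M i j h).V),
      (M i j h).IsLeaf v → ∃ k : Fin n, k ≠ i ∧ k ≠ j ∧ ℓ i j h k = v)
    -- `d i j k l` is the distance in the tree `M i j` between the leaves labeled `k` and `l`
    (d : Fin n → Fin n → Fin n → Fin n → ℝ)
    (hd : ∀ (i j : Fin n) (h : i ≠ j) (k l : Fin n), k ≠ i → k ≠ j → l ≠ i → l ≠ j →
      d i j k l = (M i j h).dist (ℓ i j h k) (ℓ i j h l))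
    -- compatibility: `d i j k l` is invariant under every permutation of the four indices
    (hcompat : ∀ i j k l : Fin n, i ≠ j → i ≠ k → i ≠ l → j ≠ k → j ≠ l → k ≠ l →
      ∀ σ : Equiv.Perm (Fin 4),
        d (![i,j,k,l] (σ 0)) (![i,j,k,l] (σ 1)) (![i,j,k,l] (σ 2)) (![i,j,k,l] (σ 3))
          = d i j k l) :
    ∀ (i j : Fin n) (h : i ≠ j),
      ∃ φ : (M i j h).G ≃g (M j i h.symm).G,
        (∀ k : Fin n, k ≠ i → k ≠ j → φ (ℓ i j h k) = ℓ j i h.symm k) ∧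
        ∀ e ∈ (M i j h).G.edgeSet, (M j i h.symm).w (Sym2.map (⇑φ) e) = (M i j h).w e := by
  intro i j h
  let L₁ (k : {k // k ≠ i ∧ k ≠ j}) := ℓ i j h k
  let L₂ (k : {k // k ≠ i ∧ k ≠ j}) := ℓ j i h.symm k
  have hm : ∀ k l, (M i j h).dist (L₁ k) (L₁ l) = (M j i h.symm).dist (L₂ k) (L₂ l) := by
    rintro ⟨k, hki, hkj⟩ ⟨l, hli, hlj⟩
    rcases eq_or_ne k l with rfl | hkl
    · simp
    have hswap : d j i k l = d i j k l :=
      hcompat i j k l h hki.symm hli.symm hkj.symm hlj.symm hkl (Equiv.swap 0 1)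
    rw [← hd i j h k l hki hkj hli hlj, ← hd j i h.symm k l hkj hki hlj hli, hswap]
  obtain ⟨φ, hφ, hw⟩ := WCubicTree.exists_iso_of_leaf_dist_eq (L₁ := L₁) (L₂ := L₂)
    (fun v hv => by obtain ⟨k, hki, hkj, rfl⟩ := hsurj i j h v hv; exact ⟨⟨k, hki, hkj⟩, rfl⟩)
    (fun v hv => by obtain ⟨k, hkj, hki, rfl⟩ := hsurj j i h.symm v hv; exact ⟨⟨k, hki, hkj⟩, rfl⟩)
    hm
  exact ⟨φ, fun k hki hkj => hφ ⟨k, hki, hkj⟩, hw⟩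

/-- For a matrix of weighted cubic trees whose metrics satisfy the compatibility condition
(invariance of `d^{(ij)}_{kl}` under all permutations of the four indices), the matrix is
symmetric: `M i j` and `M j i` are isomorphic as weighted trees with labeled leaves. -/
theorem planar_matrix_symmetric
    (n : ℕ) (hn : 4 ≤ n)
    (M : ∀ i j : Fin n, i ≠ j → WCubicTree)
    (ℓ : ∀ (i j : Fin n) (h : i ≠ j), Fin n → (M i j h).V)
    (hinj : ∀ (i j : Fin n) (h : i ≠ j) (k l : Fin n),
      k ≠ i → k ≠ j → l ≠ i → l ≠ j → ℓ i j h k = ℓ i j h l → k = l)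
    (hleaf : ∀ (i j : Fin n) (h : i ≠ j) (k : Fin n),
      k ≠ i → k ≠ j → (M i j h).IsLeaf (ℓ i j h k))
    (hsurj : ∀ (i j : Fin n) (h : i ≠ j) (v : (M i j h).V),
      (M i j h).IsLeaf v → ∃ k : Fin n, k ≠ i ∧ k ≠ j ∧ ℓ i j h k = v)
    -- `d i j k l` is the distance in the tree `M i j` between the leaves labeled `k` and `l`
    (d : Fin n → Fin n → Fin n → Fin n → ℝ)
    (hd : ∀ (i j : Fin n) (h : i ≠ j) (k l : Fin n), k ≠ i → k ≠ j → l ≠ i → l ≠ j →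
      d i j k l = (M i j h).dist (ℓ i j h k) (ℓ i j h l))
    -- compatibility: `d i j k l` is invariant under every permutation of the four indices
    (hcompat : ∀ i j k l : Fin n, i ≠ j → i ≠ k → i ≠ l → j ≠ k → j ≠ l → k ≠ l →
      ∀ σ : Equiv.Perm (Fin 4),
        d (![i,j,k,l] (σ 0)) (![i,j,k,l] (σ 1)) (![i,j,k,l] (σ 2)) (![i,j,k,l] (σ 3))
          = d i j k l) :
    ∀ (i j : Fin n) (h : i ≠ j),
      ∃ φ : (M i j h).G ≃g (M j i h.symm).G,
        (∀ k : Fin n, k ≠ i → k ≠ j → φ (ℓ i j h k) = ℓ j i h.symm k) ∧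
        ∀ e ∈ (M i j h).G.edgeSet, (M j i h.symm).w (Sym2.map (⇑φ) e) = (M i j h).w e :=
  planar_matrix_symmetric_general n M ℓ hsurj d hd hcompat
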